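/- arXiv:1911.03396 — 5 statements merged into one kernel-verified Lean document; each statement's English description precedes it below -/
import Mathlib

section
/- Let W be a real random variable and γ a mean-zero function of W with finite variance, and suppose E[γ(W)φ(W)] = E[T₁ φ'(T₂)] for all suitable φ. Then for any differentiable g with Var[g(W)] finite, Var[g(W)] ≥ (E[T₁ g'(T₂)])² / Var[γ(W)]. -/
open MeasureTheory ProbabilityTheory
open scoped RealInnerProductSpace

/-! Since `γ(W)` is centred, the coupling identity applied to `φ = g` says that
`E[T₁ g'(T₂)] = E[γ(W) g(W)]` is the covariance of `γ(W)` and `g(W)`; the Cauchy–Schwarz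
inequality in `L²` bounds its square by `Var[γ(W)] · Var[g(W)]`. -/

section CauchySchwarz

variable {α : Type*} [MeasurableSpace α] {μ : Measure α} {f h : α → ℝ}

lemma MeasureTheory.MemLp.inner_toLp_eq_integral_mul (hf : MemLp f 2 μ) (hh : MemLp h 2 μ) :
    ⟪hf.toLp f, hh.toLp h⟫ = ∫ x, f x * h x ∂μ := by
  rw [L2.inner_def]
  refine integral_congr_ae ?_
  filter_upwards [hf.coeFn_toLp, hh.coeFn_toLp] with x hfx hhx
  simp [hfx, hhx, mul_comm]

lemma sq_integral_mul_le_integral_sq_mul_integral_sq (hf : MemLp f 2 μ) (hh : MemLp h 2 μ) :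
    (∫ x, f x * h x ∂μ) ^ 2 ≤ (∫ x, f x ^ 2 ∂μ) * ∫ x, h x ^ 2 ∂μ := by
  simpa only [← hf.inner_toLp_eq_integral_mul hh, ← hf.inner_toLp_eq_integral_mul hf,
    ← hh.inner_toLp_eq_integral_mul hh, sq] using
    real_inner_mul_inner_self_le (hf.toLp f) (hh.toLp h)

end CauchySchwarz

section Covariance

variable {Ω : Type*} [MeasurableSpace Ω] {μ : Measure Ω} {X Y : Ω → ℝ}

lemma sq_covariance_le_variance_mul_variance [IsFiniteMeasure μ]
    (hX : MemLp X 2 μ) (hY : MemLp Y 2 μ) :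
    cov[X, Y; μ] ^ 2 ≤ Var[X; μ] * Var[Y; μ] := by
  rw [covariance, variance_eq_integral hX.aemeasurable, variance_eq_integral hY.aemeasurable]
  exact sq_integral_mul_le_integral_sq_mul_integral_sq (hX.sub (memLp_const _))
    (hY.sub (memLp_const _))

lemma sq_covariance_div_variance_le_variance [IsFiniteMeasure μ]
    (hX : MemLp X 2 μ) (hY : MemLp Y 2 μ) :
    cov[X, Y; μ] ^ 2 / Var[X; μ] ≤ Var[Y; μ] := by
  rcases (variance_nonneg X μ).eq_or_lt with hzero | hpos
  · rw [← hzero, div_zero]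
    exact variance_nonneg Y μ
  · rw [div_le_iff₀ hpos, mul_comm]
    exact sq_covariance_le_variance_mul_variance hX hY

lemma covariance_eq_integral_mul_of_integral_eq_zero (hX : Integrable X μ)
    (hXY : Integrable (fun ω => X ω * Y ω) μ) (hX0 : μ[X] = 0) :
    cov[X, Y; μ] = ∫ ω, X ω * Y ω ∂μ := by
  simp only [covariance, hX0, sub_zero, mul_sub]
  rw [integral_sub hXY (hX.mul_const _), integral_mul_const, hX0, zero_mul, sub_zero]

end Covariance

/-- General lower variance bound from a Stein coupling:
`Var[g(W)] ≥ (E[T₁ g'(T₂)])² / Var[γ(W)]`. -/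
theorem stmt1 {Ω : Type*} [MeasureSpace Ω] [IsProbabilityMeasure (ℙ : Measure Ω)]
    (W T₁ T₂ : Ω → ℝ) (γ : ℝ → ℝ)
    (hγ_mean : ∫ ω, γ (W ω) ∂ℙ = 0)
    (hγ_var : MemLp (fun ω => γ (W ω)) 2 ℙ)
    (hcoupling : ∀ φ : ℝ → ℝ, Differentiable ℝ φ →
      Integrable (fun ω => γ (W ω) * φ (W ω)) ℙ →
      Integrable (fun ω => T₁ ω * deriv φ (T₂ ω)) ℙ →
      ∫ ω, γ (W ω) * φ (W ω) ∂ℙ = ∫ ω, T₁ ω * deriv φ (T₂ ω) ∂ℙ)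
    (g : ℝ → ℝ) (hg : Differentiable ℝ g)
    (hgW : MemLp (fun ω => g (W ω)) 2 ℙ)
    (hgγ : Integrable (fun ω => γ (W ω) * g (W ω)) ℙ)
    (hInt : Integrable (fun ω => T₁ ω * deriv g (T₂ ω)) ℙ) :
    variance (fun ω => g (W ω)) ℙ ≥
      (∫ ω, T₁ ω * deriv g (T₂ ω) ∂ℙ) ^ 2 / variance (fun ω => γ (W ω)) ℙ := by
  have hcov :
      cov[fun ω => γ (W ω), fun ω => g (W ω); ℙ] = ∫ ω, T₁ ω * deriv g (T₂ ω) ∂ℙ := by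
    rw [covariance_eq_integral_mul_of_integral_eq_zero (hγ_var.integrable one_le_two) hgγ
      hγ_mean]
    exact hcoupling g hg hgγ hInt
  rw [← hcov]
  exact sq_covariance_div_variance_le_variance hγ_var hgW
end

section
/- A Pearson-type random variable with mean μ, whose density p satisfies p'(x)/p(x) = −((2δ₁+1)(x−μ) + δ₂)/(δ₁(x−μ)² + δ₂(x−μ) + δ₃), has Stein kernel τ(x) = δ₁(x−μ)² + δ₂(x−μ) + δ₃; that is, E[(X−μ)φ(X)] = E[τ(X)φ'(X)] for all suitable φ. -/
/-!
Write `τ(x) = δ₁(x-μ)² + δ₂(x-μ) + δ₃`. The Pearson equation says exactly that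
`(τ p)' = -(x-μ) p` on the support `s`, so `h = τ p φ` satisfies `h' = p τ φ' - p (x-μ) φ`
there, and the identity becomes `∫ₛ h' = 0`. At a finite endpoint of `s`, `h` vanishes because
`p` does. At an infinite endpoint `h` has a limit, as `h'` is integrable, and this limit is `0`:
otherwise `h(x)/(x-μ)` would be comparable to the non-integrable `1/(x-μ)`, whereas
`τ = O((x-μ)²)` bounds it by the integrable `p(x-μ)φ`.
-/

open MeasureTheory ProbabilityTheory Set Filter Topology Asymptotics

namespace Set.OrdConnected

variable {α : Type*} [LinearOrder α] {s : Set α} {a : α}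

theorem Ici_subset_of_not_bddAbove (hs : s.OrdConnected) (ha : a ∈ s) (hb : ¬BddAbove s) :
    Ici a ⊆ s := fun x hx =>
  let ⟨_y, hy, hxy⟩ := not_bddAbove_iff.1 hb x
  hs.out ha hy ⟨hx.out, hxy.le⟩

theorem Iic_subset_of_not_bddBelow (hs : s.OrdConnected) (ha : a ∈ s) (hb : ¬BddBelow s) :
    Iic a ⊆ s := fun x hx =>
  let ⟨_y, hy, hyx⟩ := not_bddBelow_iff.1 hb x
  hs.out hy ha ⟨hyx.le, hx.out⟩

end Set.OrdConnected

section ConditionallyCompleteLinearOrder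

variable {α : Type*} [ConditionallyCompleteLinearOrder α] [TopologicalSpace α] [OrderTopology α]
  [DenselyOrdered α] {s : Set α} {a : α}

theorem IsOpen.csSup_notMem [NoMaxOrder α] (hso : IsOpen s) (hb : BddAbove s) : sSup s ∉ s := by
  intro hs
  obtain ⟨y, hy, hys⟩ := ((frequently_gt_nhds _).and_eventually (hso.mem_nhds hs)).exists
  exact hy.not_ge (le_csSup hb hys)

theorem IsOpen.csInf_notMem [NoMinOrder α] (hso : IsOpen s) (hb : BddBelow s) : sInf s ∉ s := by
  intro hs
  obtain ⟨y, hy, hys⟩ := ((frequently_lt_nhds _).and_eventually (hso.mem_nhds hs)).exists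
  exact hy.not_ge (csInf_le hb hys)

theorem Set.OrdConnected.inter_Ioi_eq_Ioo [NoMaxOrder α] (hs : s.OrdConnected) (hso : IsOpen s)
    (ha : a ∈ s) (hb : BddAbove s) : s ∩ Ioi a = Ioo a (sSup s) := by
  ext x
  constructor
  · rintro ⟨hx, hax⟩
    exact ⟨hax, (le_csSup hb hx).lt_of_ne fun h => hso.csSup_notMem hb (h ▸ hx)⟩
  · rintro ⟨hax, hx⟩
    obtain ⟨y, hy, hxy⟩ := exists_lt_of_lt_csSup ⟨a, ha⟩ hx
    exact ⟨hs.out ha hy ⟨hax.le, hxy.le⟩, hax⟩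

theorem Set.OrdConnected.inter_Iic_eq_Ioc [NoMinOrder α] (hs : s.OrdConnected) (hso : IsOpen s)
    (ha : a ∈ s) (hb : BddBelow s) : s ∩ Iic a = Ioc (sInf s) a := by
  ext x
  constructor
  · rintro ⟨hx, hxa⟩
    exact ⟨(csInf_le hb hx).lt_of_ne fun h => hso.csInf_notMem hb (h ▸ hx), hxa⟩
  · rintro ⟨hx, hxa⟩
    obtain ⟨y, hy, hyx⟩ := exists_lt_of_csInf_lt ⟨a, ha⟩ hx
    exact ⟨hs.out hy ha ⟨hyx.le, hxa⟩, hxa⟩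

end ConditionallyCompleteLinearOrder

section FTC

variable {s : Set ℝ} {f f' : ℝ → ℝ} {a : ℝ}

theorem setIntegral_inter_Ioi_of_hasDerivAt (hs : s.OrdConnected) (hso : IsOpen s) (ha : a ∈ s)
    (hf : Continuous f) (hderiv : ∀ x ∈ s, HasDerivAt f (f' x) x) (hint : IntegrableOn f' s)
    (hfr : ∀ x ∈ frontier s, f x = 0)
    (htop : ¬BddAbove s → ∀ L, Tendsto f atTop (𝓝 L) → L = 0) :
    ∫ x in s ∩ Ioi a, f' x = -f a := by
  by_cases hb : BddAbove s
  · have hsub : Ioo a (sSup s) ⊆ s := hs.inter_Ioi_eq_Ioo hso ha hb ▸ inter_subset_left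
    have hle : a ≤ sSup s := le_csSup hb ha
    have hsup : sSup s ∈ frontier s := by
      rw [hso.frontier_eq]
      exact ⟨csSup_mem_closure ⟨a, ha⟩ hb, hso.csSup_notMem hb⟩
    rw [hs.inter_Ioi_eq_Ioo hso ha hb, ← integral_Ioc_eq_integral_Ioo,
      ← intervalIntegral.integral_of_le hle,
      intervalIntegral.integral_eq_sub_of_hasDerivAt_of_le hle hf.continuousOn
        (fun x hx => hderiv x (hsub hx))
        ((intervalIntegrable_iff_integrableOn_Ioo_of_le hle).2 (hint.mono_set hsub)),
      hfr _ hsup, zero_sub]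
  · have hsub := hs.Ici_subset_of_not_bddAbove ha hb
    have hint' : IntegrableOn f' (Ioi a) := hint.mono_set (Ioi_subset_Ici_self.trans hsub)
    have hlim := tendsto_limUnder_of_hasDerivAt_of_integrableOn_Ioi
      (fun x hx => hderiv x (hsub hx.out.le)) hint'
    rw [inter_eq_right.2 (Ioi_subset_Ici_self.trans hsub),
      integral_Ioi_of_hasDerivAt_of_tendsto' (fun x hx => hderiv x (hsub hx)) hint' hlim,
      htop hb _ hlim, zero_sub]

theorem setIntegral_inter_Iic_of_hasDerivAt (hs : s.OrdConnected) (hso : IsOpen s) (ha : a ∈ s)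
    (hf : Continuous f) (hderiv : ∀ x ∈ s, HasDerivAt f (f' x) x) (hint : IntegrableOn f' s)
    (hfr : ∀ x ∈ frontier s, f x = 0)
    (hbot : ¬BddBelow s → ∀ L, Tendsto f atBot (𝓝 L) → L = 0) :
    ∫ x in s ∩ Iic a, f' x = f a := by
  by_cases hb : BddBelow s
  · have hsub : Ioo (sInf s) a ⊆ s :=
      Ioo_subset_Ioc_self.trans (hs.inter_Iic_eq_Ioc hso ha hb ▸ inter_subset_left)
    have hle : sInf s ≤ a := csInf_le hb ha
    have hinf : sInf s ∈ frontier s := by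
      rw [hso.frontier_eq]
      exact ⟨csInf_mem_closure ⟨a, ha⟩ hb, hso.csInf_notMem hb⟩
    rw [hs.inter_Iic_eq_Ioc hso ha hb, ← intervalIntegral.integral_of_le hle,
      intervalIntegral.integral_eq_sub_of_hasDerivAt_of_le hle hf.continuousOn
        (fun x hx => hderiv x (hsub hx))
        ((intervalIntegrable_iff_integrableOn_Ioo_of_le hle).2 (hint.mono_set hsub)),
      hfr _ hinf, sub_zero]
  · have hsub := hs.Iic_subset_of_not_bddBelow ha hb
    have hint' : IntegrableOn f' (Iic a) := hint.mono_set hsub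
    have hlim := tendsto_limUnder_of_hasDerivAt_of_integrableOn_Iic
      (fun x hx => hderiv x (hsub hx)) hint'
    rw [inter_eq_right.2 hsub,
      integral_Iic_of_hasDerivAt_of_tendsto' (fun x hx => hderiv x (hsub hx)) hint' hlim,
      hbot hb _ hlim, sub_zero]

theorem setIntegral_eq_zero_of_hasDerivAt (hs : s.OrdConnected) (hso : IsOpen s)
    (hf : Continuous f) (hderiv : ∀ x ∈ s, HasDerivAt f (f' x) x) (hint : IntegrableOn f' s)
    (hfr : ∀ x ∈ frontier s, f x = 0)
    (htop : ¬BddAbove s → ∀ L, Tendsto f atTop (𝓝 L) → L = 0)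
    (hbot : ¬BddBelow s → ∀ L, Tendsto f atBot (𝓝 L) → L = 0) :
    ∫ x in s, f' x = 0 := by
  rcases s.eq_empty_or_nonempty with rfl | ⟨a, ha⟩
  · simp
  have hsplit : s = s ∩ Iic a ∪ s ∩ Ioi a := by
    rw [← inter_union_distrib_left, Iic_union_Ioi, inter_univ]
  have hdisj : Disjoint (s ∩ Iic a) (s ∩ Ioi a) :=
    (Iic_disjoint_Ioi le_rfl).mono inter_subset_right inter_subset_right
  rw [hsplit, setIntegral_union hdisj (hso.measurableSet.inter measurableSet_Ioi)
      (hint.mono_set inter_subset_left) (hint.mono_set inter_subset_left),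
    setIntegral_inter_Iic_of_hasDerivAt hs hso ha hf hderiv hint hfr hbot,
    setIntegral_inter_Ioi_of_hasDerivAt hs hso ha hf hderiv hint hfr htop, add_neg_cancel]

end FTC

theorem not_integrableAtFilter_sub_inv {l : Filter ℝ} [l.NeBot] [TendstoIxxClass Icc l l]
    (hl : l ≤ cocompact ℝ) (c : ℝ) : ¬IntegrableAtFilter (fun x => (x - c)⁻¹) l := by
  rintro ⟨k, hk, hint⟩
  have hne : ∀ᶠ x in l, x - c ≠ 0 := hl <| by
    simpa [sub_ne_zero] using (isCompact_singleton (x := c)).compl_mem_cocompact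
  have hderiv : ∀ᶠ x in l, HasDerivAt (fun y => Real.log (y - c)) (x - c)⁻¹ x :=
    hne.mono fun x hx => by simpa using ((hasDerivAt_id x).sub_const c).log hx
  refine not_integrableOn_of_tendsto_norm_atTop_of_deriv_isBigO_filter l hk
    (hderiv.mono fun x hx => hx.differentiableAt) ?_
    (EventuallyEq.isBigO (hderiv.mono fun x hx => hx.deriv)) hint
  have habs : Tendsto (fun x : ℝ => |x - c|) l atTop :=
    (tendsto_norm_cocompact_atTop.comp
      (Homeomorph.subRight c).isClosedEmbedding.tendsto_cocompact).mono_left hl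
  exact (tendsto_norm_atTop_atTop.comp Real.tendsto_log_atTop).comp habs |>.congr fun x => by simp

theorem eq_zero_of_tendsto_of_integrableAtFilter_mul {α : Type*} [MeasurableSpace α]
    {μ : Measure α} {l : Filter α} [l.IsMeasurablyGenerated] {g h : α → ℝ} {L : ℝ}
    (hg : ¬IntegrableAtFilter g l μ) (hgm : StronglyMeasurableAtFilter g l μ)
    (hh : Tendsto h l (𝓝 L)) (hhg : IntegrableAtFilter (fun x => h x * g x) l μ) : L = 0 := by
  by_contra hL
  have hbdd : (fun _ => (1 : ℝ)) =O[l] h :=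
    (isBigO_const_left_iff_pos_le_norm one_ne_zero).2 ⟨‖L‖ / 2, by positivity,
      (hh.norm.eventually (eventually_gt_nhds (half_lt_self (norm_pos_iff.2 hL)))).mono
        fun x hx => hx.le⟩
  have : g =O[l] fun x => h x * g x := by simpa using hbdd.mul (isBigO_refl g l)
  exact hg (this.integrableAtFilter hgm hhg)

theorem integrableAtFilter_mul_sub_inv_of_isBigO {l : Filter ℝ} [l.IsMeasurablyGenerated]
    {f g : ℝ → ℝ} {c : ℝ} (hf : f =O[l] fun x => (x - c) ^ 2 * g x) (hc : ∀ᶠ x in l, x ≠ c)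
    (hfm : Measurable f) (hg : IntegrableAtFilter (fun x => (x - c) * g x) l) :
    IntegrableAtFilter (fun x => f x * (x - c)⁻¹) l := by
  refine IsBigO.integrableAtFilter ?_
    (hfm.mul (measurable_id.sub_const c).inv).stronglyMeasurable.stronglyMeasurableAtFilter hg
  refine (hf.mul (isBigO_refl (fun x => (x - c)⁻¹) l)).congr' .rfl ?_
  filter_upwards [hc] with x hx
  field_simp [sub_ne_zero.2 hx]

theorem setIntegral_stein_identity {s : Set ℝ} {p τ φ : ℝ → ℝ} {μ : ℝ} (hs : s.OrdConnected)
    (hso : IsOpen s) (hp : Continuous p) (hτ : Continuous τ) (hφ : Differentiable ℝ φ)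
    (hfr : ∀ x ∈ frontier s, p x = 0)
    (hτp : ∀ x ∈ s, HasDerivAt (fun y => τ y * p y) (-(x - μ) * p x) x)
    (hgrowth : τ =O[cocompact ℝ] fun x => (x - μ) ^ 2)
    (h₁ : IntegrableOn (fun x => p x * ((x - μ) * φ x)) s)
    (h₂ : IntegrableOn (fun x => p x * (τ x * deriv φ x)) s) :
    ∫ x in s, p x * ((x - μ) * φ x) = ∫ x in s, p x * (τ x * deriv φ x) := by
  have hcont : Continuous fun x => τ x * p x * φ x := (hτ.mul hp).mul hφ.continuous
  have hne : ∀ᶠ x in cocompact ℝ, x ≠ μ := (isCompact_singleton (x := μ)).compl_mem_cocompact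
  have hinv : StronglyMeasurable fun x : ℝ => (x - μ)⁻¹ :=
    (measurable_id.sub_const μ).inv.stronglyMeasurable
  have hlim {l : Filter ℝ} [l.NeBot] [l.IsMeasurablyGenerated] [TendstoIxxClass Icc l l]
      (hl : l ≤ cocompact ℝ) (hsl : s ∈ l) (L : ℝ)
      (hL : Tendsto (fun x => τ x * p x * φ x) l (𝓝 L)) : L = 0 := by
    refine eq_zero_of_tendsto_of_integrableAtFilter_mul (not_integrableAtFilter_sub_inv hl μ)
      hinv.stronglyMeasurableAtFilter hL
      (integrableAtFilter_mul_sub_inv_of_isBigO (g := fun x => p x * φ x) ?_ (hl hne)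
        hcont.measurable ⟨s, hsl, h₁.congr_fun (fun x _ => by ring) hso.measurableSet⟩)
    exact ((hgrowth.mono hl).mul (isBigO_refl (fun x => p x * φ x) l)).congr'
      (.of_eq (by ext; ring)) .rfl
  have hzero := setIntegral_eq_zero_of_hasDerivAt (f := fun x => τ x * p x * φ x)
    (f' := fun x => p x * (τ x * deriv φ x) - p x * ((x - μ) * φ x)) hs hso hcont
    (fun x hx => ((hτp x hx).mul (hφ x).hasDerivAt).congr_deriv (by ring)) (h₂.sub h₁)
    (fun x hx => by simp [hfr x hx])
    (fun hb => hlim atTop_le_cocompact <| let ⟨a, ha⟩ := nonempty_of_not_bddAbove hb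
      mem_of_superset (Ici_mem_atTop a) (hs.Ici_subset_of_not_bddAbove ha hb))
    (fun hb => hlim atBot_le_cocompact <| let ⟨a, ha⟩ := nonempty_of_not_bddBelow hb
      mem_of_superset (Iic_mem_atBot a) (hs.Iic_subset_of_not_bddBelow ha hb))
  rw [integral_sub h₂ h₁, sub_eq_zero] at hzero
  exact hzero.symm

theorem isBigO_quadratic_cocompact (μ δ₁ δ₂ δ₃ : ℝ) :
    (fun x => δ₁ * (x - μ) ^ 2 + δ₂ * (x - μ) + δ₃) =O[cocompact ℝ] fun x => (x - μ) ^ 2 := by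
  have hfar : ∀ᶠ x in cocompact ℝ, 1 ≤ |x - μ| := by
    filter_upwards [(isCompact_closedBall μ 1).compl_mem_cocompact] with x hx
    simp only [mem_compl_iff, Metric.mem_closedBall, not_le, Real.dist_eq] at hx
    exact hx.le
  refine IsBigO.of_bound (|δ₁| + |δ₂| + |δ₃|) (hfar.mono fun x hx => ?_)
  have hlin : |x - μ| ≤ (x - μ) ^ 2 := by nlinarith [sq_abs (x - μ)]
  have hone : (1 : ℝ) ≤ (x - μ) ^ 2 := by nlinarith [sq_abs (x - μ)]
  simp only [Real.norm_eq_abs, abs_of_nonneg (sq_nonneg (x - μ))]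
  calc |δ₁ * (x - μ) ^ 2 + δ₂ * (x - μ) + δ₃|
      ≤ |δ₁ * (x - μ) ^ 2| + |δ₂ * (x - μ)| + |δ₃| := abs_add_three _ _ _
    _ = |δ₁| * (x - μ) ^ 2 + |δ₂| * |x - μ| + |δ₃| := by rw [abs_mul, abs_mul, abs_sq]
    _ ≤ (|δ₁| + |δ₂| + |δ₃|) * (x - μ) ^ 2 := by
        nlinarith [abs_nonneg δ₂, abs_nonneg δ₃, mul_le_mul_of_nonneg_left hlin (abs_nonneg δ₂)]

theorem hasDerivAt_quadratic_mul_of_pearson {p : ℝ → ℝ} {μ δ₁ δ₂ δ₃ x : ℝ}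
    (hp : DifferentiableAt ℝ p x) (hpx : p x ≠ 0)
    (hτx : δ₁ * (x - μ) ^ 2 + δ₂ * (x - μ) + δ₃ ≠ 0)
    (hpearson : deriv p x / p x =
      -((2 * δ₁ + 1) * (x - μ) + δ₂) / (δ₁ * (x - μ) ^ 2 + δ₂ * (x - μ) + δ₃)) :
    HasDerivAt (fun y => (δ₁ * (y - μ) ^ 2 + δ₂ * (y - μ) + δ₃) * p y) (-(x - μ) * p x) x := by
  have hτ : HasDerivAt (fun y => δ₁ * (y - μ) ^ 2 + δ₂ * (y - μ) + δ₃)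
      (2 * δ₁ * (x - μ) + δ₂) x := by
    have hu := (hasDerivAt_id x).sub_const μ
    exact (((hu.pow 2).const_mul δ₁).add (hu.const_mul δ₂) |>.add_const δ₃).congr_deriv
      (by simp; ring)
  refine (hτ.mul hp.hasDerivAt).congr_deriv ?_
  rw [div_eq_div_iff hpx hτx] at hpearson
  linear_combination hpearson

section Density

variable {Ω : Type*} [MeasurableSpace Ω] {P : Measure Ω} {X : Ω → ℝ} {p F : ℝ → ℝ}

theorem withDensity_ofReal_eq_restrict_pos (hp : Measurable p) :
    volume.withDensity (fun x => ENNReal.ofReal (p x)) =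
      (volume.restrict {x | 0 < p x}).withDensity fun x => ENNReal.ofReal (p x) := by
  rw [← withDensity_indicator (measurableSet_lt measurable_const hp)]
  congr with x
  by_cases hx : x ∈ {x | 0 < p x}
  · rw [indicator_of_mem hx]
  · rw [indicator_of_notMem hx, ENNReal.ofReal_eq_zero.2 (not_lt.1 hx)]

theorem toReal_ofReal_smul_eqOn_pos :
    EqOn (fun x => (ENNReal.ofReal (p x)).toReal • F x) (fun x => p x * F x) {x | 0 < p x} :=
  fun x hx => by dsimp only; rw [ENNReal.toReal_ofReal hx.out.le, smul_eq_mul]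

theorem integral_comp_eq_setIntegral_pos (hX : Measurable X)
    (hlaw : P.map X = volume.withDensity fun x => ENNReal.ofReal (p x)) (hp : Measurable p)
    (hF : Measurable F) :
    ∫ ω, F (X ω) ∂P = ∫ x in {x | 0 < p x}, p x * F x := by
  rw [← integral_map hX.aemeasurable hF.aestronglyMeasurable, hlaw,
    withDensity_ofReal_eq_restrict_pos hp, integral_withDensity_eq_integral_toReal_smul
      hp.ennreal_ofReal (ae_of_all _ fun _ => ENNReal.ofReal_lt_top)]
  exact setIntegral_congr_fun (measurableSet_lt measurable_const hp) toReal_ofReal_smul_eqOn_pos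

theorem integrableOn_pos_of_integrable_comp (hX : Measurable X)
    (hlaw : P.map X = volume.withDensity fun x => ENNReal.ofReal (p x)) (hp : Measurable p)
    (hF : Measurable F) (hint : Integrable (fun ω => F (X ω)) P) :
    IntegrableOn (fun x => p x * F x) {x | 0 < p x} := by
  have := (integrable_map_measure hF.aestronglyMeasurable hX.aemeasurable).2 hint
  rw [hlaw, withDensity_ofReal_eq_restrict_pos hp, integrable_withDensity_iff_integrable_smul'
    hp.ennreal_ofReal (ae_of_all _ fun _ => ENNReal.ofReal_lt_top)] at this
  exact IntegrableOn.congr_fun this toReal_ofReal_smul_eqOn_pos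
    (measurableSet_lt measurable_const hp)

end Density

theorem stmt11_general {Ω : Type*} [MeasureSpace Ω] [IsProbabilityMeasure (ℙ : Measure Ω)]
    (X : Ω → ℝ) (hXmeas : Measurable X) (p : ℝ → ℝ) (s : Set ℝ)
    (hdensity : Measure.map X ℙ = volume.withDensity fun x => ENNReal.ofReal (p x))
    (hp_diff : Differentiable ℝ p)
    (hs : s.OrdConnected) (hsupp : ∀ x, 0 < p x ↔ x ∈ s)
    (μ : ℝ) (δ₁ δ₂ δ₃ : ℝ)
    (hquad_pos : ∀ x ∈ s, 0 < δ₁ * (x - μ) ^ 2 + δ₂ * (x - μ) + δ₃)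
    (hpearson : ∀ x ∈ s, deriv p x / p x =
      -((2 * δ₁ + 1) * (x - μ) + δ₂) / (δ₁ * (x - μ) ^ 2 + δ₂ * (x - μ) + δ₃)) :
    ∀ φ : ℝ → ℝ, Differentiable ℝ φ →
      Integrable (fun ω => (X ω - μ) * φ (X ω)) ℙ →
      Integrable (fun ω =>
        (δ₁ * (X ω - μ) ^ 2 + δ₂ * (X ω - μ) + δ₃) * deriv φ (X ω)) ℙ →
      ∫ ω, (X ω - μ) * φ (X ω) ∂ℙ =
        ∫ ω, (δ₁ * (X ω - μ) ^ 2 + δ₂ * (X ω - μ) + δ₃) * deriv φ (X ω) ∂ℙ := by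
  intro φ hφ h₁ h₂
  obtain rfl : {x | 0 < p x} = s := Set.ext hsupp
  have hp := hp_diff.continuous
  have hτ : Continuous fun x => δ₁ * (x - μ) ^ 2 + δ₂ * (x - μ) + δ₃ := by fun_prop
  have hF₁ : Measurable fun x => (x - μ) * φ x :=
    (measurable_id.sub_const μ).mul hφ.continuous.measurable
  have hF₂ : Measurable fun x => (δ₁ * (x - μ) ^ 2 + δ₂ * (x - μ) + δ₃) * deriv φ x :=
    hτ.measurable.mul (measurable_deriv φ)
  rw [integral_comp_eq_setIntegral_pos hXmeas hdensity hp.measurable hF₁,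
    integral_comp_eq_setIntegral_pos hXmeas hdensity hp.measurable hF₂]
  exact setIntegral_stein_identity hs (isOpen_lt continuous_const hp) hp hτ hφ
    (fun x hx => (frontier_lt_subset_eq continuous_const hp hx).symm)
    (fun x hx => hasDerivAt_quadratic_mul_of_pearson (hp_diff x) hx.out.ne'
      (hquad_pos x hx).ne' (hpearson x hx))
    (isBigO_quadratic_cocompact μ δ₁ δ₂ δ₃)
    (integrableOn_pos_of_integrable_comp hXmeas hdensity hp.measurable hF₁ h₁)
    (integrableOn_pos_of_integrable_comp hXmeas hdensity hp.measurable hF₂ h₂)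

/-- Pearson family: if the density `p` of `X` satisfies
`p'(x)/p(x) = −((2δ₁+1)(x−μ) + δ₂)/(δ₁(x−μ)² + δ₂(x−μ) + δ₃)` on its interval support,
then `τ(x) = δ₁(x−μ)² + δ₂(x−μ) + δ₃` is a Stein kernel for `X`. -/
theorem stmt11 {Ω : Type*} [MeasureSpace Ω] [IsProbabilityMeasure (ℙ : Measure Ω)]
    (X : Ω → ℝ) (hXmeas : Measurable X) (p : ℝ → ℝ) (s : Set ℝ)
    (hdensity : Measure.map X ℙ = volume.withDensity fun x => ENNReal.ofReal (p x))
    (hp_diff : Differentiable ℝ p)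
    (hs : s.OrdConnected) (hsupp : ∀ x, 0 < p x ↔ x ∈ s)
    (μ : ℝ) (hmean : ∫ ω, X ω ∂ℙ = μ) (hL2 : MemLp X 2 ℙ)
    (δ₁ δ₂ δ₃ : ℝ) (hδ : ¬(δ₁ = 0 ∧ δ₂ = 0 ∧ δ₃ = 0))
    (hquad_pos : ∀ x ∈ s, 0 < δ₁ * (x - μ) ^ 2 + δ₂ * (x - μ) + δ₃)
    (hpearson : ∀ x ∈ s, deriv p x / p x =
      -((2 * δ₁ + 1) * (x - μ) + δ₂) / (δ₁ * (x - μ) ^ 2 + δ₂ * (x - μ) + δ₃)) :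
    ∀ φ : ℝ → ℝ, Differentiable ℝ φ →
      Integrable (fun ω => (X ω - μ) * φ (X ω)) ℙ →
      Integrable (fun ω =>
        (δ₁ * (X ω - μ) ^ 2 + δ₂ * (X ω - μ) + δ₃) * deriv φ (X ω)) ℙ →
      ∫ ω, (X ω - μ) * φ (X ω) ∂ℙ =
        ∫ ω, (δ₁ * (X ω - μ) ^ 2 + δ₂ * (X ω - μ) + δ₃) * deriv φ (X ω) ∂ℙ :=
  stmt11_general X hXmeas p s hdensity hp_diff hs hsupp μ δ₁ δ₂ δ₃ hquad_pos hpearson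
end

section
/- Let W have mean zero and finite variance σ², and let W* have the W-zero-biased distribution, so E[Wφ(W)] = σ² E[φ'(W*)] for all suitable φ. Then for all differentiable g with Var[g(W)] finite, σ²(E[g'(W*)])² ≤ Var[g(W)] ≤ σ² E[g'(W*)²]. -/
open MeasureTheory ProbabilityTheory Set
open scoped ENNReal Interval

/-!
For the lower bound, `E W = 0` turns the zero-bias identity with `φ = g` into
`Cov(W, g(W)) = σ² E[g'(W*)]`, and Cauchy–Schwarz bounds `Cov(W, g(W))²` by `σ² Var[g(W)]`.

For the upper bound, `Var[g(W)] ≤ E[(g(W) - g(0))²] ≤ E[|W| ∫_{(0,W]} g'²]` by Cauchy–Schwarz on the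
segment, and by Tonelli the right-hand side is `∫ g'² dζ` for an explicit measure `ζ` on `ℝ`.
Since `g'` need not be continuous, the primitive of `g'²` need not be differentiable, so the
zero-bias identity cannot be applied to it directly. Instead, testing the identity on primitives of
bounded continuous functions identifies `ζ` with `σ²` times the law of `W*`.
-/

theorem sq_integral_mul_le_integral_sq_mul_integral_sq_s12 {α : Type*} [MeasurableSpace α]
    {μ : Measure α} {f g : α → ℝ} (hf : MemLp f 2 μ) (hg : MemLp g 2 μ) :
    (∫ a, f a * g a ∂μ) ^ 2 ≤ (∫ a, f a ^ 2 ∂μ) * ∫ a, g a ^ 2 ∂μ := by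
  have h := real_inner_mul_inner_self_le (hf.toLp f) (hg.toLp g)
  simp only [L2.inner_def, RCLike.inner_apply, conj_trivial] at h
  have e : ∀ {u v : α → ℝ} (hu : MemLp u 2 μ) (hv : MemLp v 2 μ),
      ∫ a, hv.toLp v a * hu.toLp u a ∂μ = ∫ a, u a * v a ∂μ := fun hu hv =>
    integral_congr_ae <| by
      filter_upwards [hu.coeFn_toLp, hv.coeFn_toLp] with a hua hva
      rw [hua, hva, mul_comm]
  rw [e hf hg, e hf hf, e hg hg] at h
  simpa only [sq] using h

theorem covariance_sq_le_variance_mul {Ω : Type*} [MeasurableSpace Ω] {μ : Measure Ω}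
    [IsFiniteMeasure μ] {X Y : Ω → ℝ} (hX : MemLp X 2 μ) (hY : MemLp Y 2 μ) :
    cov[X, Y; μ] ^ 2 ≤ Var[X; μ] * Var[Y; μ] := by
  rw [covariance, variance_eq_integral hX.aestronglyMeasurable.aemeasurable,
    variance_eq_integral hY.aestronglyMeasurable.aemeasurable]
  exact sq_integral_mul_le_integral_sq_mul_integral_sq_s12 (hX.sub (memLp_const _))
    (hY.sub (memLp_const _))

theorem sq_sub_le_mul_integral_deriv_sq {g : ℝ → ℝ} (hg : Differentiable ℝ g) {a b : ℝ}
    (hint : IntegrableOn (fun t => deriv g t ^ 2) (Ι a b)) :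
    (g b - g a) ^ 2 ≤ |b - a| * ∫ t in Ι a b, deriv g t ^ 2 := by
  have : IsFiniteMeasure (volume.restrict (Ι a b)) :=
    isFiniteMeasure_restrict.2 (by simp [Real.volume_uIoc])
  have hL2 : MemLp (deriv g) 2 (volume.restrict (Ι a b)) :=
    (memLp_two_iff_integrable_sq (measurable_deriv g).aestronglyMeasurable).2 hint
  have hftc : g b - g a = (if a ≤ b then 1 else -1) * ∫ t in Ι a b, deriv g t := by
    rw [← intervalIntegral.integral_eq_sub_of_hasDerivAt (fun t _ => (hg t).hasDerivAt)
      (intervalIntegrable_iff.2 (hL2.integrable one_le_two)),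
      intervalIntegral.intervalIntegral_eq_integral_uIoc, smul_eq_mul]
  have hcs := sq_integral_mul_le_integral_sq_mul_integral_sq_s12 (memLp_const 1) hL2
  simp only [one_mul, one_pow, integral_const, smul_eq_mul, mul_one] at hcs
  rw [measureReal_restrict_apply_univ, measureReal_def, Real.volume_uIoc,
    ENNReal.toReal_ofReal (abs_nonneg _)] at hcs
  calc (g b - g a) ^ 2 = (∫ t in Ι a b, deriv g t) ^ 2 := by rw [hftc]; split_ifs <;> ring
    _ ≤ |b - a| * ∫ t in Ι a b, deriv g t ^ 2 := hcs

theorem ofReal_sq_sub_le_mul_setLIntegral_deriv_sq {g : ℝ → ℝ} (hg : Differentiable ℝ g)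
    (a b : ℝ) :
    ENNReal.ofReal ((g b - g a) ^ 2) ≤
      ENNReal.ofReal |b - a| * ∫⁻ t in Ι a b, ENNReal.ofReal (deriv g t ^ 2) := by
  rcases eq_or_ne a b with rfl | hab
  · simp
  by_cases hJ : ∫⁻ t in Ι a b, ENNReal.ofReal (deriv g t ^ 2) = ∞
  · rw [hJ, ENNReal.mul_top (by simpa [sub_eq_zero] using hab.symm)]
    exact le_top
  have hint : IntegrableOn (fun t => deriv g t ^ 2) (Ι a b) :=
    ⟨((measurable_deriv g).pow_const 2).aestronglyMeasurable,
      (hasFiniteIntegral_iff_ofReal (ae_of_all _ fun _ => sq_nonneg _)).2 (lt_top_iff_ne_top.2 hJ)⟩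
  rw [← ofReal_integral_eq_lintegral_ofReal hint (ae_of_all _ fun _ => sq_nonneg _),
    ← ENNReal.ofReal_mul (abs_nonneg _)]
  exact ENNReal.ofReal_le_ofReal (sq_sub_le_mul_integral_deriv_sq hg hint)

section ZeroBias

variable {Ω : Type*} [MeasurableSpace Ω] {μ : Measure Ω} {W : Ω → ℝ}

theorem measurableSet_snd_mem_uIoc (hW : Measurable W) :
    MeasurableSet {p : Ω × ℝ | p.2 ∈ Ι 0 (W p.1)} := by
  simp only [uIoc, mem_Ioc, ofPred_and]
  exact (measurableSet_lt (measurable_const.min (hW.comp measurable_fst)) measurable_snd).inter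
    (measurableSet_le measurable_snd (measurable_const.max (hW.comp measurable_fst)))

theorem measurable_indicator_uIoc (hW : Measurable W) {c : Ω × ℝ → ℝ≥0∞} (hc : Measurable c) :
    Measurable fun p : Ω × ℝ => (Ι 0 (W p.1)).indicator (fun _ => c p) p.2 :=
  hc.indicator (measurableSet_snd_mem_uIoc hW)

variable (μ W) in
/-- `σ²` times the law of `W*`: its density at `t` is `E[W; W ≥ t]` for `t > 0` and
`E[-W; W < t]` for `t ≤ 0`. -/
noncomputable def zeroBiasMeasure : Measure ℝ :=
  volume.withDensity fun t => ∫⁻ ω, (Ι 0 (W ω)).indicator (fun _ => ENNReal.ofReal |W ω|) t ∂μ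

theorem lintegral_zeroBiasMeasure [SFinite μ] (hW : Measurable W) {v : ℝ → ℝ≥0∞}
    (hv : Measurable v) :
    ∫⁻ t, v t ∂zeroBiasMeasure μ W =
      ∫⁻ ω, ENNReal.ofReal |W ω| * (∫⁻ t in Ι 0 (W ω), v t) ∂μ := by
  have hF : Measurable fun p : Ω × ℝ =>
      (Ι 0 (W p.1)).indicator (fun _ => ENNReal.ofReal |W p.1|) p.2 :=
    measurable_indicator_uIoc hW (hW.comp measurable_fst).abs.ennreal_ofReal
  rw [zeroBiasMeasure, lintegral_withDensity_eq_lintegral_mul _ hF.lintegral_prod_left' hv]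
  calc ∫⁻ t, ((fun t => ∫⁻ ω, (Ι 0 (W ω)).indicator (fun _ => ENNReal.ofReal |W ω|) t ∂μ) * v) t
      = ∫⁻ t, ∫⁻ ω, (Ι 0 (W ω)).indicator (fun t => ENNReal.ofReal |W ω| * v t) t ∂μ := by
        refine lintegral_congr fun t => ?_
        simp only [Pi.mul_apply, indicator_mul_left]
        exact (lintegral_mul_const _ (hF.comp measurable_prodMk_right)).symm
    _ = ∫⁻ ω, ENNReal.ofReal |W ω| * (∫⁻ t in Ι 0 (W ω), v t) ∂μ := by
        rw [lintegral_lintegral_swap]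
        · refine lintegral_congr fun ω => ?_
          rw [lintegral_indicator measurableSet_uIoc, lintegral_const_mul _ hv]
        · exact ((measurable_indicator_uIoc hW
            ((hW.comp measurable_fst).abs.ennreal_ofReal.mul (hv.comp measurable_snd))).comp
              measurable_swap).aemeasurable

theorem zeroBiasMeasure_univ [SFinite μ] (hW : Measurable W) :
    zeroBiasMeasure μ W univ = ∫⁻ ω, ENNReal.ofReal (W ω ^ 2) ∂μ := by
  rw [← lintegral_one, lintegral_zeroBiasMeasure hW measurable_const]
  refine lintegral_congr fun ω => ?_
  rw [setLIntegral_one, Real.volume_uIoc, sub_zero, ← ENNReal.ofReal_mul (abs_nonneg _),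
    abs_mul_abs_self, sq]

theorem isFiniteMeasure_zeroBiasMeasure [SFinite μ] (hW : Measurable W) (hW2 : MemLp W 2 μ) :
    IsFiniteMeasure (zeroBiasMeasure μ W) :=
  ⟨by rw [zeroBiasMeasure_univ hW]; exact hW2.integrable_sq.lintegral_lt_top⟩

theorem integrable_mul_intervalIntegral (hW : MemLp W 2 μ) {ψ : ℝ → ℝ} (hψ : Continuous ψ)
    {C : ℝ} (hC : ∀ t, ‖ψ t‖ ≤ C) :
    Integrable (fun ω => W ω * ∫ t in 0..W ω, ψ t) μ := by
  have hΨ : Continuous fun x => ∫ t in 0..x, ψ t :=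
    intervalIntegral.continuous_primitive hψ.intervalIntegrable 0
  refine (hW.integrable_sq.const_mul C).mono' (hW.1.mul (hΨ.comp_aestronglyMeasurable hW.1))
    (ae_of_all _ fun ω => ?_)
  have h := intervalIntegral.norm_integral_le_of_norm_le_const (a := 0) (b := W ω) fun t _ => hC t
  rw [sub_zero] at h
  calc ‖W ω * ∫ t in 0..W ω, ψ t‖ ≤ |W ω| * (C * |W ω|) := by
        rw [norm_mul, Real.norm_eq_abs]; gcongr
    _ = C * W ω ^ 2 := by rw [mul_left_comm, abs_mul_abs_self, sq]

theorem sub_mul_intervalIntegral_eq_abs_mul_setIntegral (f : ℝ → ℝ) (a b : ℝ) :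
    (b - a) * ∫ t in a..b, f t = |b - a| * ∫ t in Ι a b, f t := by
  rw [intervalIntegral.intervalIntegral_eq_integral_uIoc, smul_eq_mul]
  split_ifs with hab
  · rw [abs_of_nonneg (sub_nonneg.2 hab), one_mul]
  · rw [abs_of_neg (sub_neg.2 (not_le.1 hab))]
    ring

variable (μ W) in
def IsZeroBiased (Wstar : Ω → ℝ) (σ : ℝ) : Prop :=
  ∀ φ : ℝ → ℝ, Differentiable ℝ φ →
    Integrable (fun ω => W ω * φ (W ω)) μ →
    Integrable (fun ω => deriv φ (Wstar ω)) μ →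
    ∫ ω, W ω * φ (W ω) ∂μ = σ ^ 2 * ∫ ω, deriv φ (Wstar ω) ∂μ

variable {Wstar : Ω → ℝ} {σ : ℝ}

theorem IsZeroBiased.integral_mul_intervalIntegral [IsFiniteMeasure μ]
    (h : IsZeroBiased μ W Wstar σ) (hW : MemLp W 2 μ) (hWstar : AEMeasurable Wstar μ)
    {ψ : ℝ → ℝ} (hψ : Continuous ψ) {C : ℝ} (hC : ∀ t, ‖ψ t‖ ≤ C) :
    ∫ ω, W ω * (∫ t in 0..W ω, ψ t) ∂μ = σ ^ 2 * ∫ ω, ψ (Wstar ω) ∂μ := by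
  have hderiv : deriv (fun x => ∫ t in 0..x, ψ t) = ψ := funext (hψ.deriv_integral ψ 0)
  have hψWstar : Integrable (fun ω => ψ (Wstar ω)) μ := (integrable_const C).mono'
    (hψ.comp_aestronglyMeasurable hWstar.aestronglyMeasurable) (ae_of_all _ fun ω => hC _)
  have key := h (fun x => ∫ t in 0..x, ψ t)
    (fun x => (hψ.integral_hasStrictDerivAt 0 x).hasDerivAt.differentiableAt)
    (integrable_mul_intervalIntegral hW hψ hC) (by rwa [hderiv])
  rwa [hderiv] at key

theorem IsZeroBiased.smul_map_eq_zeroBiasMeasure [IsFiniteMeasure μ]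
    (h : IsZeroBiased μ W Wstar σ) (hWm : Measurable W) (hW : MemLp W 2 μ)
    (hWstar : Measurable Wstar) :
    ENNReal.ofReal (σ ^ 2) • μ.map Wstar = zeroBiasMeasure μ W := by
  have : IsFiniteMeasure (ENNReal.ofReal (σ ^ 2) • μ.map Wstar) :=
    (μ.map Wstar).smul_finite ENNReal.ofReal_ne_top
  have := isFiniteMeasure_zeroBiasMeasure hWm hW
  refine ext_of_forall_lintegral_eq_of_IsFiniteMeasure fun f => ?_
  have hf : Measurable fun t => (f t : ℝ≥0∞) := f.continuous.measurable.coe_nnreal_ennreal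
  have hψ : Continuous fun t => (f t : ℝ) := NNReal.continuous_coe.comp f.continuous
  have hC : ∀ t, ‖(f t : ℝ)‖ ≤ nndist f 0 := fun t => by
    rw [NNReal.norm_eq]; exact_mod_cast BoundedContinuousFunction.NNReal.upper_bound f t
  have hsign : ∀ x : ℝ, x * ∫ t in 0..x, (f t : ℝ) = |x| * ∫ t in Ι 0 x, (f t : ℝ) := fun x => by
    simpa only [sub_zero] using
      sub_mul_intervalIntegral_eq_abs_mul_setIntegral (fun t => (f t : ℝ)) 0 x
  have hpt : ∀ x : ℝ, ENNReal.ofReal (x * ∫ t in 0..x, (f t : ℝ)) =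
      ENNReal.ofReal |x| * ∫⁻ t in Ι 0 x, (f t : ℝ≥0∞) := fun x => by
    rw [hsign, ENNReal.ofReal_mul (abs_nonneg _), ofReal_integral_eq_lintegral_ofReal
        hψ.integrableOn_uIoc (ae_of_all _ fun t => (f t).2)]
    simp only [ENNReal.ofReal_coe_nnreal]
  have hnonneg : ∀ x : ℝ, 0 ≤ x * ∫ t in 0..x, (f t : ℝ) := fun x => by
    rw [hsign]
    exact mul_nonneg (abs_nonneg _) (setIntegral_nonneg measurableSet_uIoc fun t _ => (f t).2)
  have hint := integrable_mul_intervalIntegral hW hψ hC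
  rw [lintegral_smul_measure, lintegral_map hf hWstar, lintegral_zeroBiasMeasure hWm hf]
  simp_rw [← hpt]
  rw [← ofReal_integral_eq_lintegral_ofReal hint (ae_of_all _ fun ω => hnonneg (W ω)),
    h.integral_mul_intervalIntegral hW hWstar.aemeasurable hψ hC, ENNReal.ofReal_mul (sq_nonneg σ),
    ofReal_integral_eq_lintegral_ofReal ((integrable_const _).mono'
      (hψ.comp_aestronglyMeasurable hWstar.aestronglyMeasurable) (ae_of_all _ fun ω => hC _))
      (ae_of_all _ fun ω => (f _).2), smul_eq_mul]
  simp only [ENNReal.ofReal_coe_nnreal]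

theorem IsZeroBiased.sq_integral_deriv_le_variance [IsProbabilityMeasure μ]
    (h : IsZeroBiased μ W Wstar σ) (hW : MemLp W 2 μ) (hmean : μ[W] = 0)
    (hvar : Var[W; μ] = σ ^ 2) {g : ℝ → ℝ} (hg : Differentiable ℝ g)
    (hgW : MemLp (fun ω => g (W ω)) 2 μ) (hg' : Integrable (fun ω => deriv g (Wstar ω)) μ) :
    σ ^ 2 * (∫ ω, deriv g (Wstar ω) ∂μ) ^ 2 ≤ Var[fun ω => g (W ω); μ] := by
  have hcov : cov[W, fun ω => g (W ω); μ] = σ ^ 2 * ∫ ω, deriv g (Wstar ω) ∂μ := by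
    rw [covariance_eq_sub hW hgW, hmean, zero_mul, sub_zero]
    exact h g hg (hW.integrable_mul hgW) hg'
  have hcs := covariance_sq_le_variance_mul hW hgW
  rw [hcov, hvar] at hcs
  rcases eq_or_ne σ 0 with rfl | hσ
  · simp [variance_nonneg]
  refine le_of_mul_le_mul_left ?_ (by positivity : 0 < σ ^ 2)
  linarith

theorem IsZeroBiased.variance_comp_le [IsProbabilityMeasure μ]
    (h : IsZeroBiased μ W Wstar σ) (hWm : Measurable W) (hW : MemLp W 2 μ)
    (hWstar : Measurable Wstar) {g : ℝ → ℝ} (hg : Differentiable ℝ g)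
    (hg' : Integrable (fun ω => deriv g (Wstar ω) ^ 2) μ) :
    Var[fun ω => g (W ω); μ] ≤ σ ^ 2 * ∫ ω, deriv g (Wstar ω) ^ 2 ∂μ := by
  have hv : Measurable fun t => ENNReal.ofReal (deriv g t ^ 2) :=
    ((measurable_deriv g).pow_const 2).ennreal_ofReal
  have hkey : ∫⁻ ω, ENNReal.ofReal ((g (W ω) - g 0) ^ 2) ∂μ ≤
      ENNReal.ofReal (σ ^ 2) * ∫⁻ ω, ENNReal.ofReal (deriv g (Wstar ω) ^ 2) ∂μ :=
    calc ∫⁻ ω, ENNReal.ofReal ((g (W ω) - g 0) ^ 2) ∂μ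
        ≤ ∫⁻ ω, ENNReal.ofReal |W ω| *
            (∫⁻ t in Ι 0 (W ω), ENNReal.ofReal (deriv g t ^ 2)) ∂μ :=
          lintegral_mono fun ω => by
            simpa only [sub_zero] using ofReal_sq_sub_le_mul_setLIntegral_deriv_sq hg 0 (W ω)
      _ = ∫⁻ t, ENNReal.ofReal (deriv g t ^ 2) ∂zeroBiasMeasure μ W :=
          (lintegral_zeroBiasMeasure hWm hv).symm
      _ = ENNReal.ofReal (σ ^ 2) * ∫⁻ ω, ENNReal.ofReal (deriv g (Wstar ω) ^ 2) ∂μ := by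
          rw [← h.smul_map_eq_zeroBiasMeasure hWm hW hWstar, lintegral_smul_measure,
            lintegral_map hv hWstar, smul_eq_mul]
  have hgW : AEStronglyMeasurable (fun ω => g (W ω)) μ :=
    (hg.continuous.measurable.comp hWm).aestronglyMeasurable
  calc Var[fun ω => g (W ω); μ] = Var[fun ω => g (W ω) - g 0; μ] :=
        (variance_sub_const hgW _).symm
    _ ≤ ∫ ω, (g (W ω) - g 0) ^ 2 ∂μ :=
        variance_le_expectation_sq (hgW.sub aestronglyMeasurable_const)
    _ = (∫⁻ ω, ENNReal.ofReal ((g (W ω) - g 0) ^ 2) ∂μ).toReal :=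
        integral_eq_lintegral_of_nonneg_ae (ae_of_all _ fun _ => sq_nonneg _)
          ((hgW.sub aestronglyMeasurable_const).pow 2)
    _ ≤ (ENNReal.ofReal (σ ^ 2) * ∫⁻ ω, ENNReal.ofReal (deriv g (Wstar ω) ^ 2) ∂μ).toReal :=
        ENNReal.toReal_mono (ENNReal.mul_ne_top ENNReal.ofReal_ne_top hg'.lintegral_lt_top.ne) hkey
    _ = σ ^ 2 * ∫ ω, deriv g (Wstar ω) ^ 2 ∂μ := by
        rw [ENNReal.toReal_mul, ENNReal.toReal_ofReal (sq_nonneg σ),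
          ← ofReal_integral_eq_lintegral_ofReal hg' (ae_of_all _ fun _ => sq_nonneg _),
          ENNReal.toReal_ofReal (integral_nonneg fun _ => sq_nonneg _)]

end ZeroBias

/-- Zero-bias variance bounds: if `E[Wφ(W)] = σ² E[φ'(W*)]` for all suitable `φ`, then
`σ²(E[g'(W*)])² ≤ Var[g(W)] ≤ σ² E[g'(W*)²]`. -/
theorem stmt12 {Ω : Type*} [MeasureSpace Ω] [IsProbabilityMeasure (ℙ : Measure Ω)]
    (W Wstar : Ω → ℝ) (hWmeas : Measurable W) (hWstarmeas : Measurable Wstar)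
    (σ : ℝ) (hσ : 0 < σ)
    (hmean : ∫ ω, W ω ∂ℙ = 0) (hvar : variance W ℙ = σ ^ 2)
    (hzb : ∀ φ : ℝ → ℝ, Differentiable ℝ φ →
      Integrable (fun ω => W ω * φ (W ω)) ℙ →
      Integrable (fun ω => deriv φ (Wstar ω)) ℙ →
      ∫ ω, W ω * φ (W ω) ∂ℙ = σ ^ 2 * ∫ ω, deriv φ (Wstar ω) ∂ℙ)
    (g : ℝ → ℝ) (hg : Differentiable ℝ g)
    (hgW : MemLp (fun ω => g (W ω)) 2 ℙ)
    (hInt₁ : Integrable (fun ω => deriv g (Wstar ω)) ℙ)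
    (hInt₂ : Integrable (fun ω => (deriv g (Wstar ω)) ^ 2) ℙ) :
    σ ^ 2 * (∫ ω, deriv g (Wstar ω) ∂ℙ) ^ 2 ≤ variance (fun ω => g (W ω)) ℙ ∧
    variance (fun ω => g (W ω)) ℙ ≤ σ ^ 2 * ∫ ω, (deriv g (Wstar ω)) ^ 2 ∂ℙ := by
  have hzb : IsZeroBiased ℙ W Wstar σ := hzb
  have hW : MemLp W 2 ℙ :=
    memLp_two_of_variance_ne_zero hWmeas.aestronglyMeasurable (by rw [hvar]; positivity)
  exact ⟨hzb.sq_integral_deriv_le_variance hW hmean hvar hg hgW hInt₁,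
    hzb.variance_comp_le hWmeas hW hWstarmeas hg hInt₂⟩
end

section
/- Let W have mean zero and finite variance σ², and W* have the W-zero-biased distribution, coupled on the same probability space. Then for all twice differentiable g with ‖g'g''‖ < ∞ and Var[g(W)] finite: Var[g(W)] ≤ σ² E[g'(W)²] + 2σ² ‖g'g''‖ E|W* − W|. -/
/-!
By Cauchy–Schwarz, `(g x - g 0)² ≤ x ∫₀ˣ g'²`, and `φ x = ∫₀ˣ g'²` is the test function whose
zero-bias identity reads `E[W φ(W)] = σ² E[g'(W*)²]`; hence
`Var g(W) ≤ E[(g W - g 0)²] ≤ σ² E[g'(W*)²]`. As `(g')²` is `2‖g'g''‖`-Lipschitz,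
`E[g'(W*)²] ≤ E[g'(W)²] + 2‖g'g''‖ E|W* - W|`.

The identity cannot be applied to `φ` directly, since `W φ(W)` need not be integrable a priori;
it is applied to the primitives `φₙ` of `min (g'²) n`, which grow at most linearly, and
`x φₙ(x)` increases to `x φ(x)`, so the bound passes to the limit by monotone convergence.
-/

open MeasureTheory ProbabilityTheory

lemma sub_mul_intervalIntegral_nonneg {f : ℝ → ℝ} (hf : ∀ t, 0 ≤ f t) (a b : ℝ) :
    0 ≤ (b - a) * ∫ t in a..b, f t := by
  rcases le_total a b with hab | hba
  · exact mul_nonneg (sub_nonneg.2 hab) (intervalIntegral.integral_nonneg_of_forall hab hf)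
  · rw [intervalIntegral.integral_symm b, mul_neg, ← neg_mul, neg_sub]
    exact mul_nonneg (sub_nonneg.2 hba) (intervalIntegral.integral_nonneg_of_forall hba hf)

lemma sub_mul_intervalIntegral_mono {f g : ℝ → ℝ} {a b : ℝ} (hf : IntervalIntegrable f volume a b)
    (hg : IntervalIntegrable g volume a b) (hfg : ∀ t, f t ≤ g t) :
    (b - a) * ∫ t in a..b, f t ≤ (b - a) * ∫ t in a..b, g t := by
  have := sub_mul_intervalIntegral_nonneg (fun t => sub_nonneg.2 (hfg t)) a b
  rw [intervalIntegral.integral_sub hg hf, mul_sub] at this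
  linarith

lemma sq_intervalIntegral_le_of_le {f : ℝ → ℝ} (hf : Continuous f) {a b : ℝ} (hab : a ≤ b) :
    (∫ t in a..b, f t) ^ 2 ≤ (b - a) * ∫ t in a..b, f t ^ 2 := by
  rcases hab.eq_or_lt with rfl | hab
  · simp
  have hjensen := (even_two.convexOn_pow).map_set_average_le
    (continuous_pow 2).continuousOn isClosed_univ (μ := volume) (t := Set.Ioc a b) (f := f)
    (by simp [hab]) (by simp) (by simp) hf.integrableOn_Ioc (hf.pow 2).integrableOn_Ioc
  simp only [setAverage_eq, Real.volume_real_Ioc_of_le hab.le, smul_eq_mul,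
    ← intervalIntegral.integral_of_le hab.le] at hjensen
  have hba : b - a ≠ 0 := (sub_pos.2 hab).ne'
  calc (∫ t in a..b, f t) ^ 2 = (b - a) ^ 2 * ((b - a)⁻¹ * ∫ t in a..b, f t) ^ 2 := by
        field_simp
    _ ≤ (b - a) ^ 2 * ((b - a)⁻¹ * ∫ t in a..b, f t ^ 2) := by gcongr
    _ = (b - a) * ∫ t in a..b, f t ^ 2 := by field_simp

lemma sq_intervalIntegral_le {f : ℝ → ℝ} (hf : Continuous f) (a b : ℝ) :
    (∫ t in a..b, f t) ^ 2 ≤ (b - a) * ∫ t in a..b, f t ^ 2 := by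
  rcases le_total a b with hab | hba
  · exact sq_intervalIntegral_le_of_le hf hab
  · have := sq_intervalIntegral_le_of_le hf hba
    rw [intervalIntegral.integral_symm b, intervalIntegral.integral_symm b]
    linarith [neg_sq (∫ t in b..a, f t)]

lemma sq_sub_le_sub_mul_intervalIntegral_deriv_sq {g : ℝ → ℝ} (hg : Differentiable ℝ g)
    (hg' : Continuous (deriv g)) (a b : ℝ) :
    (g b - g a) ^ 2 ≤ (b - a) * ∫ t in a..b, deriv g t ^ 2 := by
  rw [← intervalIntegral.integral_deriv_eq_sub (fun t _ => hg t) (hg'.intervalIntegrable a b)]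
  exact sq_intervalIntegral_le hg' a b

lemma abs_sq_sub_sq_le {f : ℝ → ℝ} {C : ℝ} (hf : Differentiable ℝ f)
    (hC : ∀ x, |f x * deriv f x| ≤ C) (a b : ℝ) : |f a ^ 2 - f b ^ 2| ≤ 2 * C * |a - b| := by
  have hderiv : ∀ x ∈ Set.univ,
      HasDerivWithinAt (fun t => f t ^ 2) (2 * (f x * deriv f x)) Set.univ x :=
    fun x _ => ((hf x).hasDerivAt.pow 2).hasDerivWithinAt.congr_deriv (by ring)
  have hbound : ∀ x ∈ Set.univ, ‖2 * (f x * deriv f x)‖ ≤ 2 * C := fun x _ => by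
    rw [norm_mul, Real.norm_two, Real.norm_eq_abs]
    linarith [hC x]
  simpa only [Real.norm_eq_abs] using
    convex_univ.norm_image_sub_le_of_norm_hasDerivWithin_le hderiv hbound trivial trivial

lemma integral_le_of_forall_exists_le_of_monotone {α : Type*} [MeasurableSpace α] {μ : Measure α}
    {F : α → ℝ} {u : ℕ → α → ℝ} {R : ℝ} (hF : Integrable F μ) (hu : ∀ n, Integrable (u n) μ)
    (hmono : ∀ x, Monotone fun n => u n x) (hle : ∀ x, ∃ n, F x ≤ u n x)
    (hR : ∀ n, ∫ x, u n x ∂μ ≤ R) : ∫ x, F x ∂μ ≤ R := by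
  -- `min F (u n)` increases to `F`, which is integrable, while staying below `u n`.
  have hlim : Filter.Tendsto (fun n => ∫ x, min (F x) (u n x) ∂μ) Filter.atTop
      (nhds (∫ x, F x ∂μ)) := by
    refine integral_tendsto_of_tendsto_of_monotone (fun n => hF.inf (hu n)) hF
      (ae_of_all _ fun x m n hmn => min_le_min le_rfl (hmono x hmn)) (ae_of_all _ fun x => ?_)
    obtain ⟨N, hN⟩ := hle x
    exact tendsto_atTop_of_eventually_const (i₀ := N) fun n hn =>
      min_eq_left (hN.trans (hmono x hn))
  refine le_of_tendsto' hlim fun n => ?_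
  exact (integral_mono (hF.inf (hu n)) (hu n) fun x => min_le_right _ _).trans (hR n)

noncomputable def truncPrimitive (k : ℝ → ℝ) (n : ℕ) (x : ℝ) : ℝ :=
  ∫ t in (0 : ℝ)..x, min (k t) n

section truncPrimitive

variable {k : ℝ → ℝ}

lemma hasDerivAt_truncPrimitive (hk : Continuous k) (n : ℕ) (x : ℝ) :
    HasDerivAt (truncPrimitive k n) (min (k x) n) x :=
  ((hk.min continuous_const).integral_hasStrictDerivAt 0 x).hasDerivAt

lemma differentiable_truncPrimitive (hk : Continuous k) (n : ℕ) :
    Differentiable ℝ (truncPrimitive k n) :=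
  fun x => (hasDerivAt_truncPrimitive hk n x).differentiableAt

lemma deriv_truncPrimitive (hk : Continuous k) (n : ℕ) :
    deriv (truncPrimitive k n) = fun x => min (k x) n :=
  funext fun x => (hasDerivAt_truncPrimitive hk n x).deriv

lemma abs_truncPrimitive_le (hk : ∀ t, 0 ≤ k t) (n : ℕ) (x : ℝ) :
    |truncPrimitive k n x| ≤ n * |x| := by
  have hbound (t : ℝ) : ‖min (k t) n‖ ≤ n := by
    rw [Real.norm_eq_abs, abs_of_nonneg (le_min (hk t) n.cast_nonneg)]
    exact min_le_right (k t) n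
  simpa [truncPrimitive] using
    intervalIntegral.norm_integral_le_of_norm_le_const (a := 0) (b := x) fun t _ => hbound t

lemma monotone_mul_truncPrimitive (hk : Continuous k) (x : ℝ) :
    Monotone fun n : ℕ => x * truncPrimitive k n x := by
  intro m n hmn
  have hint (m : ℕ) : IntervalIntegrable (fun t => min (k t) m) volume 0 x :=
    (hk.min continuous_const).intervalIntegrable 0 x
  simpa [truncPrimitive] using
    sub_mul_intervalIntegral_mono (hint m) (hint n) fun t => min_le_min le_rfl (Nat.cast_le.2 hmn)

lemma exists_truncPrimitive_eq (hk : Continuous k) (x : ℝ) :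
    ∃ n : ℕ, truncPrimitive k n x = ∫ t in (0 : ℝ)..x, k t := by
  obtain ⟨M, hM⟩ :=
    (isCompact_uIcc (a := 0) (b := x)).exists_bound_of_continuousOn hk.continuousOn
  refine ⟨⌈M⌉₊, intervalIntegral.integral_congr fun t ht => min_eq_left ?_⟩
  exact (le_abs_self _).trans ((hM t ht).trans (Nat.le_ceil M))

end truncPrimitive

section Integrability

variable {Ω : Type*} [MeasurableSpace Ω] {μ : Measure Ω} {k : ℝ → ℝ}

lemma integrable_min_comp [IsFiniteMeasure μ] (hk : Continuous k) (hk0 : ∀ t, 0 ≤ k t)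
    {X : Ω → ℝ} (hX : AEStronglyMeasurable X μ) (n : ℕ) :
    Integrable (fun ω => min (k (X ω)) n) μ := by
  refine (integrable_const (n : ℝ)).mono'
    ((hk.min continuous_const).comp_aestronglyMeasurable hX) (ae_of_all _ fun ω => ?_)
  rw [Real.norm_eq_abs, abs_of_nonneg (le_min (hk0 _) n.cast_nonneg)]
  exact min_le_right _ _

lemma integrable_mul_truncPrimitive (hk : Continuous k) (hk0 : ∀ t, 0 ≤ k t) {X : Ω → ℝ}
    (hX : MemLp X 2 μ) (n : ℕ) : Integrable (fun ω => X ω * truncPrimitive k n (X ω)) μ := by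
  refine (hX.integrable_sq.const_mul n).mono'
    (hX.1.mul ((differentiable_truncPrimitive hk n).continuous.comp_aestronglyMeasurable hX.1))
    (ae_of_all _ fun ω => ?_)
  rw [Real.norm_eq_abs, abs_mul, ← sq_abs (X ω)]
  nlinarith [abs_truncPrimitive_le hk0 n (X ω), abs_nonneg (X ω)]

end Integrability

def IsZeroBiasCoupling {Ω : Type*} [MeasurableSpace Ω] (μ : Measure Ω) (σ : ℝ)
    (W Wstar : Ω → ℝ) : Prop :=
  ∀ φ : ℝ → ℝ, Differentiable ℝ φ →
    Integrable (fun ω => W ω * φ (W ω)) μ →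
    Integrable (fun ω => deriv φ (Wstar ω)) μ →
    ∫ ω, W ω * φ (W ω) ∂μ = σ ^ 2 * ∫ ω, deriv φ (Wstar ω) ∂μ

namespace IsZeroBiasCoupling

variable {Ω : Type*} [MeasurableSpace Ω] {μ : Measure Ω} [IsFiniteMeasure μ] {σ : ℝ}
  {W Wstar : Ω → ℝ}

lemma integral_mul_truncPrimitive {k : ℝ → ℝ} (hzb : IsZeroBiasCoupling μ σ W Wstar)
    (hW : MemLp W 2 μ) (hWstar : AEStronglyMeasurable Wstar μ) (hk : Continuous k)
    (hk0 : ∀ t, 0 ≤ k t) (n : ℕ) :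
    ∫ ω, W ω * truncPrimitive k n (W ω) ∂μ = σ ^ 2 * ∫ ω, min (k (Wstar ω)) n ∂μ := by
  simpa only [deriv_truncPrimitive hk n] using
    hzb _ (differentiable_truncPrimitive hk n) (integrable_mul_truncPrimitive hk hk0 hW n)
      (by simpa only [deriv_truncPrimitive hk n] using integrable_min_comp hk hk0 hWstar n)

lemma integral_sq_sub_le {g : ℝ → ℝ} (hzb : IsZeroBiasCoupling μ σ W Wstar)
    (hW : MemLp W 2 μ) (hWstar : AEStronglyMeasurable Wstar μ) (hg : Differentiable ℝ g)
    (hg' : Continuous (deriv g)) (hgW : Integrable (fun ω => (g (W ω) - g 0) ^ 2) μ)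
    (hg'Wstar : Integrable (fun ω => deriv g (Wstar ω) ^ 2) μ) :
    ∫ ω, (g (W ω) - g 0) ^ 2 ∂μ ≤ σ ^ 2 * ∫ ω, deriv g (Wstar ω) ^ 2 ∂μ := by
  set k := fun t => deriv g t ^ 2
  have hk : Continuous k := hg'.pow 2
  have hk0 (t : ℝ) : 0 ≤ k t := sq_nonneg _
  refine integral_le_of_forall_exists_le_of_monotone hgW
    (u := fun n ω => W ω * truncPrimitive k n (W ω)) (fun n => ?_)
    (fun ω => monotone_mul_truncPrimitive hk (W ω)) (fun ω => ?_) (fun n => ?_)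
  · exact integrable_mul_truncPrimitive hk hk0 hW n
  · obtain ⟨n, hn⟩ := exists_truncPrimitive_eq hk (W ω)
    refine ⟨n, ?_⟩
    simpa only [hn, sub_zero] using sq_sub_le_sub_mul_intervalIntegral_deriv_sq hg hg' 0 (W ω)
  · rw [integral_mul_truncPrimitive hzb hW hWstar hk hk0 n]
    exact mul_le_mul_of_nonneg_left (integral_mono (integrable_min_comp hk hk0 hWstar n) hg'Wstar
      fun ω => min_le_left _ _) (sq_nonneg σ)

end IsZeroBiasCoupling

theorem stmt14_general {Ω : Type*} [MeasureSpace Ω] [IsProbabilityMeasure (ℙ : Measure Ω)]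
    (W Wstar : Ω → ℝ) (hWmeas : Measurable W) (hWstarmeas : Measurable Wstar)
    (σ : ℝ) (hσ : 0 < σ)
    (hvar : variance W ℙ = σ ^ 2)
    (hzb : ∀ φ : ℝ → ℝ, Differentiable ℝ φ →
      Integrable (fun ω => W ω * φ (W ω)) ℙ →
      Integrable (fun ω => deriv φ (Wstar ω)) ℙ →
      ∫ ω, W ω * φ (W ω) ∂ℙ = σ ^ 2 * ∫ ω, deriv φ (Wstar ω) ∂ℙ)
    (g : ℝ → ℝ) (hg : Differentiable ℝ g) (hg' : Differentiable ℝ (deriv g))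
    (C : ℝ) (hC : ∀ x, |deriv g x * deriv (deriv g) x| ≤ C)
    (hgW : MemLp (fun ω => g (W ω)) 2 ℙ)
    (hInt₁ : Integrable (fun ω => (deriv g (W ω)) ^ 2) ℙ)
    (hInt₂ : Integrable (fun ω => |Wstar ω - W ω|) ℙ) :
    variance (fun ω => g (W ω)) ℙ ≤
      σ ^ 2 * ∫ ω, (deriv g (W ω)) ^ 2 ∂ℙ +
        2 * σ ^ 2 * C * ∫ ω, |Wstar ω - W ω| ∂ℙ := by
  have hW : MemLp W 2 ℙ :=
    memLp_two_of_variance_ne_zero hWmeas.aestronglyMeasurable (by rw [hvar]; positivity)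
  have hstar_le (ω : Ω) :
      deriv g (Wstar ω) ^ 2 ≤ deriv g (W ω) ^ 2 + 2 * C * |Wstar ω - W ω| := by
    linarith [le_abs_self (deriv g (Wstar ω) ^ 2 - deriv g (W ω) ^ 2),
      abs_sq_sub_sq_le hg' hC (Wstar ω) (W ω)]
  have hmajorant := hInt₁.add (hInt₂.const_mul (2 * C))
  have hstar : Integrable (fun ω => deriv g (Wstar ω) ^ 2) ℙ :=
    hmajorant.mono'
      ((hg'.continuous.pow 2).comp_aestronglyMeasurable hWstarmeas.aestronglyMeasurable)
      (ae_of_all _ fun ω => by rw [Real.norm_eq_abs, abs_sq]; exact hstar_le ω)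
  calc variance (fun ω => g (W ω)) ℙ = variance (fun ω => g (W ω) - g 0) ℙ :=
        (variance_sub_const hgW.1 _).symm
    _ ≤ ∫ ω, (g (W ω) - g 0) ^ 2 ∂ℙ :=
        variance_le_expectation_sq (hgW.1.sub aestronglyMeasurable_const)
    _ ≤ σ ^ 2 * ∫ ω, deriv g (Wstar ω) ^ 2 ∂ℙ :=
        IsZeroBiasCoupling.integral_sq_sub_le hzb hW hWstarmeas.aestronglyMeasurable hg
          hg'.continuous (hgW.sub (memLp_const _)).integrable_sq hstar
    _ ≤ σ ^ 2 * ∫ ω, (deriv g (W ω) ^ 2 + 2 * C * |Wstar ω - W ω|) ∂ℙ :=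
        mul_le_mul_of_nonneg_left (integral_mono hstar hmajorant hstar_le) (sq_nonneg σ)
    _ = _ := by rw [integral_add hInt₁ (hInt₂.const_mul _), integral_const_mul]; ring

/-- Zero-bias upper variance bound expressed in terms of `W` itself:
`Var[g(W)] ≤ σ² E[g'(W)²] + 2σ² ‖g'g''‖ E|W* − W|`. -/
theorem stmt14 {Ω : Type*} [MeasureSpace Ω] [IsProbabilityMeasure (ℙ : Measure Ω)]
    (W Wstar : Ω → ℝ) (hWmeas : Measurable W) (hWstarmeas : Measurable Wstar)
    (σ : ℝ) (hσ : 0 < σ)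
    (hmean : ∫ ω, W ω ∂ℙ = 0) (hvar : variance W ℙ = σ ^ 2)
    (hzb : ∀ φ : ℝ → ℝ, Differentiable ℝ φ →
      Integrable (fun ω => W ω * φ (W ω)) ℙ →
      Integrable (fun ω => deriv φ (Wstar ω)) ℙ →
      ∫ ω, W ω * φ (W ω) ∂ℙ = σ ^ 2 * ∫ ω, deriv φ (Wstar ω) ∂ℙ)
    (g : ℝ → ℝ) (hg : Differentiable ℝ g) (hg' : Differentiable ℝ (deriv g))
    (C : ℝ) (hC : ∀ x, |deriv g x * deriv (deriv g) x| ≤ C)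
    (hgW : MemLp (fun ω => g (W ω)) 2 ℙ)
    (hInt₁ : Integrable (fun ω => (deriv g (W ω)) ^ 2) ℙ)
    (hInt₂ : Integrable (fun ω => |Wstar ω - W ω|) ℙ) :
    variance (fun ω => g (W ω)) ℙ ≤
      σ ^ 2 * ∫ ω, (deriv g (W ω)) ^ 2 ∂ℙ +
        2 * σ ^ 2 * C * ∫ ω, |Wstar ω - W ω| ∂ℙ :=
  stmt14_general W Wstar hWmeas hWstarmeas σ hσ hvar hzb g hg hg' C hC hgW hInt₁ hInt₂
end

section
/- Let W have mean zero and finite variance σ². The W-zero-biased distribution has density p*(w) = (1/σ²) E[W · 1{W > w}] on ℝ; i.e., for all absolutely continuous φ with E|Wφ(W)| < ∞, E[Wφ(W)] = σ² ∫ φ'(w) p*(w) dw. -/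
/-!
Write `k(x, w) = x · 1{w < x} - x · 1{w < 0}`: for fixed `x` this is `|x|` on the interval between
`0` and `x` and `0` elsewhere, so the fundamental theorem of calculus gives
`∫ φ'(w) k(x, w) dw = x (φ(x) - φ(0))`. Averaging over `x = W` and swapping the integrals, the
left side becomes `E[W φ(W)]` (as `E[W] = 0`), while `E[k(W, w)] = E[W · 1{W > w}] = σ² p*(w)`,
again because `E[W] = 0`. Fubini applies because `k ≥ 0`, so `∫∫ |φ'(w)| k(x, w)` is just
`σ² ∫ |φ'(w) p*(w)| dw`.
-/

open MeasureTheory ProbabilityTheory Set Function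

noncomputable def zeroBiasKernel (x w : ℝ) : ℝ :=
  (if w < x then x else 0) - if w < 0 then x else 0

lemma zeroBiasKernel_eq_indicator (x : ℝ) :
    zeroBiasKernel x = (Ico (min x 0) (max x 0)).indicator fun _ => |x| := by
  funext w
  rcases le_total x 0 with hx | hx <;>
    simp only [zeroBiasKernel, indicator, mem_Ico, min_eq_left, min_eq_right, max_eq_left,
      max_eq_right, abs_of_nonneg, abs_of_nonpos, hx] <;>
    split_ifs <;> grind

lemma zeroBiasKernel_nonneg (x w : ℝ) : 0 ≤ zeroBiasKernel x w := by
  rw [zeroBiasKernel_eq_indicator]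
  exact indicator_nonneg (fun _ _ => abs_nonneg x) w

lemma abs_zeroBiasKernel_le (x w : ℝ) : |zeroBiasKernel x w| ≤ |x| := by
  rw [zeroBiasKernel_eq_indicator, ← Real.norm_eq_abs, ← Real.norm_eq_abs]
  exact (norm_indicator_le_norm_self _ w).trans_eq (norm_abs_eq_norm x)

lemma measurable_zeroBiasKernel : Measurable (uncurry zeroBiasKernel) := by
  refine .sub (.ite ?_ measurable_fst measurable_const) (.ite ?_ measurable_fst measurable_const)
  · exact measurableSet_lt measurable_snd measurable_fst
  · exact measurableSet_lt measurable_snd measurable_const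

lemma integral_Ico_deriv_eq_sub {φ : ℝ → ℝ} (hφ : Differentiable ℝ φ) {a b : ℝ} (hab : a ≤ b)
    (hint : IntegrableOn (deriv φ) (Ico a b)) : ∫ w in Ico a b, deriv φ w = φ b - φ a := by
  rw [integral_Ico_eq_integral_Ioc, ← intervalIntegral.integral_of_le hab]
  exact intervalIntegral.integral_deriv_eq_sub (fun x _ => hφ x)
    ((intervalIntegrable_iff_integrableOn_Ico_of_le hab).2 hint)

lemma integral_deriv_mul_zeroBiasKernel {φ : ℝ → ℝ} (hφ : Differentiable ℝ φ) (x : ℝ)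
    (hint : Integrable fun w => deriv φ w * zeroBiasKernel x w) :
    ∫ w, deriv φ w * zeroBiasKernel x w = x * (φ x - φ 0) := by
  rcases eq_or_ne x 0 with rfl | hx
  · simp [zeroBiasKernel]
  have hind : (fun w => deriv φ w * zeroBiasKernel x w) =
      (Ico (min x 0) (max x 0)).indicator fun w => deriv φ w * |x| := by
    funext w
    rw [zeroBiasKernel_eq_indicator, indicator_mul_right]
  rw [hind, integrable_indicator_iff measurableSet_Ico, IntegrableOn,
    integrable_mul_const_iff (abs_ne_zero.2 hx).isUnit] at hint
  rw [hind, integral_indicator measurableSet_Ico, integral_mul_const,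
    integral_Ico_deriv_eq_sub hφ min_le_max hint]
  rcases le_total x 0 with h | h
  · rw [min_eq_left h, max_eq_right h, abs_of_nonpos h]; ring
  · rw [min_eq_right h, max_eq_left h, abs_of_nonneg h]; ring

section

variable {Ω : Type*} [MeasurableSpace Ω] {μ : Measure Ω} {W : Ω → ℝ}

lemma integrable_zeroBiasKernel (hWm : Measurable W) (hW : Integrable W μ) (w : ℝ) :
    Integrable (fun ω => zeroBiasKernel (W ω) w) μ :=
  hW.mono (measurable_zeroBiasKernel.comp (hWm.prodMk measurable_const)).aestronglyMeasurable
    (ae_of_all _ fun ω => by simpa only [Real.norm_eq_abs] using abs_zeroBiasKernel_le (W ω) w)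

lemma integral_zeroBiasKernel (hWm : Measurable W) (hW : Integrable W μ)
    (hmean : ∫ ω, W ω ∂μ = 0) (w : ℝ) :
    ∫ ω, zeroBiasKernel (W ω) w ∂μ = ∫ ω, (if w < W ω then W ω else 0) ∂μ := by
  have htail : Integrable (fun ω => if w < W ω then W ω else 0) μ :=
    hW.indicator (measurableSet_lt measurable_const hWm)
  by_cases hw : w < 0
  · simp only [zeroBiasKernel, hw, if_true]
    rw [integral_sub htail hW, hmean, sub_zero]
  · simp only [zeroBiasKernel, hw, if_false, sub_zero]

lemma integral_mul_sub_eq_integral_deriv_mul [SFinite μ] (hWm : Measurable W)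
    (hW : Integrable W μ) {φ : ℝ → ℝ} (hφ : Differentiable ℝ φ)
    (hint : Integrable fun w => deriv φ w * ∫ ω, zeroBiasKernel (W ω) w ∂μ) :
    ∫ ω, W ω * (φ (W ω) - φ 0) ∂μ = ∫ w, deriv φ w * ∫ ω, zeroBiasKernel (W ω) w ∂μ := by
  set f : Ω → ℝ → ℝ := fun ω w => deriv φ w * zeroBiasKernel (W ω) w with hf_def
  have hf : Integrable (uncurry f) (μ.prod volume) := by
    have hmeas : AEStronglyMeasurable (uncurry f) (μ.prod volume) :=
      (((measurable_deriv φ).comp measurable_snd).mul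
        (measurable_zeroBiasKernel.comp (hWm.prodMap measurable_id))).aestronglyMeasurable
    refine (integrable_prod_iff' hmeas).2
      ⟨ae_of_all _ fun w => (integrable_zeroBiasKernel hWm hW w).const_mul (deriv φ w), ?_⟩
    have hE_nonneg (w : ℝ) : 0 ≤ ∫ ω, zeroBiasKernel (W ω) w ∂μ :=
      integral_nonneg fun ω => zeroBiasKernel_nonneg (W ω) w
    convert hint.norm using 2 with w
    simp only [uncurry_apply_pair, hf_def, norm_mul, Real.norm_eq_abs,
      abs_of_nonneg (zeroBiasKernel_nonneg _ _),
      abs_of_nonneg (hE_nonneg w), integral_const_mul]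
  calc ∫ ω, W ω * (φ (W ω) - φ 0) ∂μ = ∫ ω, (∫ w, f ω w) ∂μ :=
        integral_congr_ae <| hf.prod_right_ae.mono fun ω h =>
          (integral_deriv_mul_zeroBiasKernel hφ (W ω) h).symm
    _ = ∫ w, ∫ ω, f ω w ∂μ := integral_integral_swap hf
    _ = ∫ w, deriv φ w * ∫ ω, zeroBiasKernel (W ω) w ∂μ := by
        simp only [hf_def, integral_const_mul]

end

/-- The zero-biased distribution of `W` (mean 0, variance `σ²`) has density
`p*(w) = σ⁻² E[W · 1{W > w}]`: for all absolutely continuous `φ`,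
`E[Wφ(W)] = σ² ∫ φ'(w) p*(w) dw`. -/
theorem stmt15 {Ω : Type*} [MeasureSpace Ω] [IsProbabilityMeasure (ℙ : Measure Ω)]
    (W : Ω → ℝ) (hWmeas : Measurable W)
    (σ : ℝ) (hσ : 0 < σ)
    (hmean : ∫ ω, W ω ∂ℙ = 0) (hvar : variance W ℙ = σ ^ 2)
    (pstar : ℝ → ℝ)
    (hpstar : pstar = fun w => (1 / σ ^ 2) * ∫ ω, (if w < W ω then W ω else 0) ∂ℙ) :
    ∀ φ : ℝ → ℝ, Differentiable ℝ φ →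
      Integrable (fun ω => W ω * φ (W ω)) ℙ →
      Integrable (fun w => deriv φ w * pstar w) volume →
      ∫ ω, W ω * φ (W ω) ∂ℙ = σ ^ 2 * ∫ w, deriv φ w * pstar w := by
  intro φ hφ hWφ hint
  have hσ2 : σ ^ 2 ≠ 0 := by positivity
  have hW : Integrable W ℙ :=
    (memLp_two_of_variance_ne_zero hWmeas.aestronglyMeasurable (hvar ▸ hσ2)).integrable one_le_two
  have hkernel (w : ℝ) : ∫ ω, zeroBiasKernel (W ω) w ∂ℙ = σ ^ 2 * pstar w := by
    rw [integral_zeroBiasKernel hWmeas hW hmean, hpstar]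
    field_simp
  have hint' : Integrable fun w => deriv φ w * ∫ ω, zeroBiasKernel (W ω) w ∂ℙ := by
    simpa only [hkernel, mul_left_comm] using hint.const_mul (σ ^ 2)
  calc ∫ ω, W ω * φ (W ω) ∂ℙ = ∫ ω, W ω * (φ (W ω) - φ 0) ∂ℙ := by
        simp_rw [mul_sub]
        rw [integral_sub hWφ (hW.mul_const _), integral_mul_const, hmean, zero_mul, sub_zero]
    _ = ∫ w, deriv φ w * ∫ ω, zeroBiasKernel (W ω) w ∂ℙ :=
        integral_mul_sub_eq_integral_deriv_mul hWmeas hW hφ hint'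
    _ = σ ^ 2 * ∫ w, deriv φ w * pstar w := by
        simp only [hkernel, mul_left_comm _ (σ ^ 2), integral_const_mul]
end
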